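/- There is an infinite antichain of labelled paths for the tree-embedding order: for n ≥ 1 let s_n be the path with n+2 vertices where the first edge is labelled p_r, all subsequent edges are labelled p_ℓ, all vertices are labelled 0 except the last which is labelled p_ℓ. Then for all i ≠ j, s_i and s_j are incomparable under the embedding order requiring edges to map to edges with greater-or-equal labels. -/

import Mathlib

/-- Finite rooted trees with vertex labels in `L` and edge labels in `E`. -/
inductive LTree (L E : Type) : Type where
  | node : L → List (E × LTree L E) → LTree L E

mutual
  /-- Root-preserving label-increasing embedding of labelled trees: the roots are
  matched, and the children of the root are injectively matched to children of
  the image with edge labels increased, recursively. -/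
  inductive StrongEmb {L E : Type} (lL : L → L → Prop) (lE : E → E → Prop) :
      LTree L E → LTree L E → Prop where
    | node {a b : L} {ts us : List (E × LTree L E)} :
        lL a b → StrongEmbList lL lE ts us →
        StrongEmb lL lE (.node a ts) (.node b us)

  /-- Injective matching of a list of labelled subtrees into another list. -/
  inductive StrongEmbList {L E : Type} (lL : L → L → Prop) (lE : E → E → Prop) :
      List (E × LTree L E) → List (E × LTree L E) → Prop where
    | nil (us : List (E × LTree L E)) : StrongEmbList lL lE [] us
    | cons {t : E × LTree L E} {ts : List (E × LTree L E)}
        {us₁ : List (E × LTree L E)} {u : E × LTree L E} {us₂ : List (E × LTree L E)} :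
        lE t.1 u.1 → StrongEmb lL lE t.2 u.2 →
        StrongEmbList lL lE ts (us₁ ++ us₂) →
        StrongEmbList lL lE (t :: ts) (us₁ ++ u :: us₂)
end

/-- `Subtree u s` holds iff `u` is a (maximal) subtree of `s`. -/
inductive Subtree {L E : Type} : LTree L E → LTree L E → Prop where
  | refl (s : LTree L E) : Subtree s s
  | child {s : LTree L E} {e : E} {u : LTree L E} {b : L}
      {us : List (E × LTree L E)} :
      (e, u) ∈ us → Subtree s u → Subtree s (.node b us)

/-- The embedding order on labelled trees: `s ≤ s'` iff there is an injective
label-increasing embedding of `s` onto (a subtree of) `s'`. -/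
def Emb {L E : Type} (lL : L → L → Prop) (lE : E → E → Prop)
    (s s' : LTree L E) : Prop :=
  ∃ u : LTree L E, Subtree u s' ∧ StrongEmb lL lE s u

/-- Markings over the two places `{p_r, p_ℓ}`, ordered componentwise. -/
def leM (x y : ℕ × ℕ) : Prop := x.1 ≤ y.1 ∧ x.2 ≤ y.2

/-- The marking `p_r`. -/
def pr : ℕ × ℕ := (1, 0)

/-- The marking `p_ℓ`. -/
def pl : ℕ × ℕ := (0, 1)

/-- Chain of `k` edges labelled `p_ℓ`, internal vertices labelled `0`,
final vertex labelled `p_ℓ`. -/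
def tail : ℕ → LTree (ℕ × ℕ) (ℕ × ℕ)
  | 0 => .node pl []
  | k + 1 => .node (0, 0) [(pl, tail k)]

/-- The path `s_n`: `n + 2` vertices, first edge labelled `p_r`, the remaining
`n` edges labelled `p_ℓ`, all vertices labelled `0` except the last labelled
`p_ℓ`. -/
def sPath (n : ℕ) : LTree (ℕ × ℕ) (ℕ × ℕ) := .node (0, 0) [(pr, tail n)]

/-!
An embedding of `s_i` into a subtree of `s_j` is either rooted at the root of `s_j`, or at a
vertex of the `p_ℓ`-tail of `s_j`. In the first case it restricts to an embedding of the tail of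
`s_i` into the tail of `s_j`, and tails only embed into tails of the same length: the leaf label
`p_ℓ` is not below the label `0` of an inner vertex, and a leaf has no room for an edge.
In the second case the `p_r`-edge of `s_i` would have to go to a `p_ℓ`-edge.
-/

section StrongEmb

variable {L E : Type} {lL : L → L → Prop} {lE : E → E → Prop}

lemma StrongEmbList.not_cons_nil {t : E × LTree L E} {ts : List (E × LTree L E)} :
    ¬ StrongEmbList lL lE (t :: ts) [] := by
  generalize hus : ([] : List (E × LTree L E)) = us
  rintro (_ | ⟨-, -, -⟩)
  simp at hus

lemma StrongEmbList.of_cons_singleton {t v : E × LTree L E} {ts : List (E × LTree L E)}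
    (h : StrongEmbList lL lE (t :: ts) [v]) : lE t.1 v.1 ∧ StrongEmb lL lE t.2 v.2 := by
  generalize hus : [v] = us at h
  rcases h with _ | @⟨_, _, us₁, u, us₂, hlabel, hemb, -⟩
  obtain ⟨rfl, rfl, rfl⟩ : us₁ = [] ∧ u = v ∧ us₂ = [] := by
    cases us₁ <;> simp_all
  exact ⟨hlabel, hemb⟩

lemma StrongEmb.not_node_cons_leaf {a b : L} {t : E × LTree L E} {ts : List (E × LTree L E)} :
    ¬ StrongEmb lL lE (.node a (t :: ts)) (.node b []) := by
  rintro ⟨-, hlist⟩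
  exact StrongEmbList.not_cons_nil hlist

lemma StrongEmb.of_node_cons_singleton {a b : L} {t v : E × LTree L E}
    {ts : List (E × LTree L E)} (h : StrongEmb lL lE (.node a (t :: ts)) (.node b [v])) :
    lE t.1 v.1 ∧ StrongEmb lL lE t.2 v.2 := by
  rcases h with ⟨-, hlist⟩
  exact hlist.of_cons_singleton

end StrongEmb

lemma Subtree.of_node_singleton {L E : Type} {u s : LTree L E} {b : L} {e : E}
    (h : Subtree u (.node b [(e, s)])) : u = .node b [(e, s)] ∨ Subtree u s := by
  rcases h with _ | ⟨hmem, hsub⟩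
  · exact .inl rfl
  · obtain ⟨-, rfl⟩ := List.mem_singleton.mp hmem
    exact .inr hsub

lemma exists_eq_tail_of_subtree_tail {u : LTree (ℕ × ℕ) (ℕ × ℕ)} :
    ∀ {k : ℕ}, Subtree u (tail k) → ∃ m, u = tail m
  | 0, h => by
    rcases h with _ | ⟨hmem, -⟩
    · exact ⟨0, rfl⟩
    · simp at hmem
  | k + 1, h => by
    rcases Subtree.of_node_singleton h with rfl | hsub
    · exact ⟨k + 1, rfl⟩
    · exact exists_eq_tail_of_subtree_tail hsub

lemma subtree_sPath {u : LTree (ℕ × ℕ) (ℕ × ℕ)} {n : ℕ} (h : Subtree u (sPath n)) :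
    u = sPath n ∨ ∃ m, u = tail m :=
  (Subtree.of_node_singleton h).imp_right exists_eq_tail_of_subtree_tail

lemma eq_of_strongEmb_tail : ∀ {i j : ℕ}, StrongEmb leM leM (tail i) (tail j) → i = j
  | 0, 0, _ => rfl
  | 0, _ + 1, ⟨hlabel, _⟩ => absurd hlabel.2 (by simp [pl])
  | _ + 1, 0, h => absurd h StrongEmb.not_node_cons_leaf
  | _ + 1, _ + 1, h => congrArg (· + 1) (eq_of_strongEmb_tail h.of_node_cons_singleton.2)

lemma not_strongEmb_sPath_tail (i m : ℕ) : ¬ StrongEmb leM leM (sPath i) (tail m) := by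
  cases m with
  | zero => exact StrongEmb.not_node_cons_leaf
  | succ m =>
    intro h
    exact absurd h.of_node_cons_singleton.1.1 (by simp [pr, pl])

/-- The family `{s_n}_{n ≥ 1}` is an infinite antichain for the tree-embedding
order: for `i ≠ j`, `s_i` and `s_j` are incomparable. -/
theorem sPath_antichain :
    ∀ i j : ℕ, 1 ≤ i → 1 ≤ j → i ≠ j → ¬ Emb leM leM (sPath i) (sPath j) := by
  rintro i j - - hij ⟨u, hsub, hemb⟩
  rcases subtree_sPath hsub with rfl | ⟨m, rfl⟩
  · exact hij (eq_of_strongEmb_tail hemb.of_node_cons_singleton.2)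
  · exact not_strongEmb_sPath_tail i m hemb
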